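/- arXiv:2502.10986 — 2 statements merged into one kernel-verified Lean document; each statement's English description precedes it below -/
import Mathlib

section
/- Let g : ℝ^n → ℝ ∪ {+∞} be proper, lower semicontinuous and strongly quasiconvex with modulus γ > 0 on a closed convex set C ⊆ dom g, let λ > 0, x ∈ C, and suppose x̂ is a minimizer over C of y ↦ g(y) + (1/(2λ))‖y - x‖². Then for all y ∈ C and all μ ∈ [0,1], g(x̂) - max{g(y), g(x̂)} ≤ (μ/λ)⟨x̂ - x, y - x̂⟩ + (μ/2)(μ/λ - γ + μγ)‖y - x̂‖². -/
open RealInnerProductSpace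

theorem stmt_7 (n : ℕ) (C : Set (EuclideanSpace ℝ (Fin n)))
    (hC : IsClosed C) (hCc : Convex ℝ C)
    (g : EuclideanSpace ℝ (Fin n) → ℝ) (hg : LowerSemicontinuous g)
    (γ : ℝ) (hγ : 0 < γ)
    (hsq : ∀ x ∈ C, ∀ y ∈ C, ∀ μ ∈ Set.Icc (0 : ℝ) 1,
      g (μ • y + (1 - μ) • x) ≤ max (g y) (g x) - μ * (1 - μ) * (γ / 2) * ‖x - y‖ ^ 2)
    (lam : ℝ) (hlam : 0 < lam) (x : EuclideanSpace ℝ (Fin n)) (hx : x ∈ C)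
    (xh : EuclideanSpace ℝ (Fin n)) (hxh : xh ∈ C)
    (hmin : ∀ y ∈ C, g xh + (1 / (2 * lam)) * ‖xh - x‖ ^ 2 ≤ g y + (1 / (2 * lam)) * ‖y - x‖ ^ 2) :
    ∀ y ∈ C, ∀ μ ∈ Set.Icc (0 : ℝ) 1,
      g xh - max (g y) (g xh) ≤
        (μ / lam) * ⟪xh - x, y - xh⟫ + (μ / 2) * (μ / lam - γ + μ * γ) * ‖y - xh‖ ^ 2 := by
  intro y hy μ hμ
  obtain ⟨hμ0, hμ1⟩ := hμ
  set z : EuclideanSpace ℝ (Fin n) := μ • y + (1 - μ) • xh with hz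
  have hzC : z ∈ C := hCc hy hxh hμ0 (by linarith) (by ring)
  have h1 := hmin z hzC
  have h2 := hsq xh hxh y hy μ ⟨hμ0, hμ1⟩
  have hexp : ‖z - x‖ ^ 2 = ‖xh - x‖ ^ 2 + 2 * μ * ⟪xh - x, y - xh⟫ + μ ^ 2 * ‖y - xh‖ ^ 2 := by
    have : z - x = (xh - x) + μ • (y - xh) := by
      simp only [hz]
      module
    rw [this, norm_add_sq_real, real_inner_smul_right, norm_smul]
    simp [mul_pow, abs_of_nonneg hμ0]
    ring
  have hnorm : ‖xh - y‖ = ‖y - xh‖ := norm_sub_rev _ _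
  rw [hexp] at h1
  rw [hnorm] at h2
  have hlam' : (0 : ℝ) < 2 * lam := by linarith
  have key : g xh ≤ g z + (1 / (2 * lam)) * (2 * μ * ⟪xh - x, y - xh⟫ + μ ^ 2 * ‖y - xh‖ ^ 2) := by
    nlinarith [h1]
  have : g xh ≤ max (g y) (g xh) - μ * (1 - μ) * (γ / 2) * ‖y - xh‖ ^ 2
      + (1 / (2 * lam)) * (2 * μ * ⟪xh - x, y - xh⟫ + μ ^ 2 * ‖y - xh‖ ^ 2) := by
    linarith
  have hfield : (1 / (2 * lam)) * (2 * μ * ⟪xh - x, y - xh⟫ + μ ^ 2 * ‖y - xh‖ ^ 2)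
      - μ * (1 - μ) * (γ / 2) * ‖y - xh‖ ^ 2
      = (μ / lam) * ⟪xh - x, y - xh⟫ + (μ / 2) * (μ / lam - γ + μ * γ) * ‖y - xh‖ ^ 2 := by
    field_simp
    ring
  linarith [hfield]
end

section
/- Let C ⊆ ℝ^n be nonempty closed convex, f : C × C → ℝ a bifunction with f(x,x) = 0 for all x ∈ C, such that y ↦ f(x,y) is strongly quasiconvex on C with modulus γ > 0 for each x ∈ C and f is jointly lower semicontinuous. Suppose sequences {y_k}, {z_k} ⊆ C both converge to x* ∈ C, λ* > 0 is fixed with λ_k ≥ λ* for all k, and for each k, z_k minimizes y ↦ f(y_k, y) + (1/(2λ_k))‖y_k - y‖² over C. If f(·, y) is upper semicontinuous for each y and f(x*, x*) = 0, then f(x*, y) ≥ 0 for all y ∈ C, i.e., x* is a solution of the equilibrium problem. -/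
open Filter

lemma aux_small (d E : ℝ) (h : ∀ μ : ℝ, 0 < μ → μ < 1 → d ≤ E * μ) : d ≤ 0 := by
  have ht : Tendsto (fun μ : ℝ => E * μ) (nhdsWithin (0:ℝ) (Set.Ioi 0)) (nhds 0) := by
    have : Tendsto (fun μ : ℝ => E * μ) (nhds (0:ℝ)) (nhds (E * 0)) :=
      (continuous_const.mul continuous_id).tendsto 0
    rw [mul_zero] at this
    exact this.mono_left nhdsWithin_le_nhds
  have hev : ∀ᶠ μ in nhdsWithin (0:ℝ) (Set.Ioi 0), d ≤ E * μ := by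
    filter_upwards [Ioo_mem_nhdsGT_of_mem (by norm_num : (0:ℝ) ∈ Set.Ico (0:ℝ) 1)] with μ hμ
    exact h μ hμ.1 hμ.2
  exact ge_of_tendsto ht hev

set_option maxHeartbeats 1000000 in
open RealInnerProductSpace in
theorem stmt_13 (n : ℕ) (C : Set (EuclideanSpace ℝ (Fin n)))
    (hCne : C.Nonempty) (hCcl : IsClosed C) (hCcv : Convex ℝ C)
    (f : EuclideanSpace ℝ (Fin n) → EuclideanSpace ℝ (Fin n) → ℝ)
    (hrefl : ∀ x ∈ C, f x x = 0)
    (γ : ℝ) (hγ : 0 < γ)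
    (hsq : ∀ x ∈ C, ∀ y ∈ C, ∀ z ∈ C, ∀ μ ∈ Set.Icc (0 : ℝ) 1,
      f x (μ • y + (1 - μ) • z) ≤ max (f x y) (f x z) - μ * (1 - μ) * (γ / 2) * ‖y - z‖ ^ 2)
    (hlsc : LowerSemicontinuous (fun p : EuclideanSpace ℝ (Fin n) × EuclideanSpace ℝ (Fin n) =>
      f p.1 p.2))
    (y z : ℕ → EuclideanSpace ℝ (Fin n)) (hy : ∀ k, y k ∈ C) (hz : ∀ k, z k ∈ C)
    (xstar : EuclideanSpace ℝ (Fin n)) (hxstar : xstar ∈ C)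
    (hyc : Tendsto y atTop (nhds xstar)) (hzc : Tendsto z atTop (nhds xstar))
    (lamstar : ℝ) (hlamstar : 0 < lamstar) (lam : ℕ → ℝ) (hlam : ∀ k, lamstar ≤ lam k)
    (hmin : ∀ k, ∀ w ∈ C,
      f (y k) (z k) + (1 / (2 * lam k)) * ‖y k - z k‖ ^ 2 ≤
        f (y k) w + (1 / (2 * lam k)) * ‖y k - w‖ ^ 2)
    (husc : ∀ w : EuclideanSpace ℝ (Fin n), UpperSemicontinuous (fun x => f x w))
    (hx0 : f xstar xstar = 0) :
    ∀ w ∈ C, 0 ≤ f xstar w := by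
  intro w hw
  by_cases hcase : ∃ᶠ k in atTop, f (y k) (z k) ≤ f (y k) w
  · -- Case 1: along a subsequence f(y_k, z_k) ≤ f(y_k, w); use lsc and usc.
    by_contra hneg
    push_neg at hneg
    set c : ℝ := f xstar w / 2 with hc
    have hc0 : c < 0 := by simp only [hc]; linarith
    have hcw : f xstar w < c := by simp only [hc]; linarith
    -- usc: eventually f (y k) w < c
    have h1 : ∀ᶠ k in atTop, f (y k) w < c := hyc.eventually (husc w xstar c hcw)
    -- lsc at (xstar, xstar): eventually c < f (y k) (z k)
    have hpt : Tendsto (fun k => (y k, z k)) atTop (nhds (xstar, xstar)) :=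
      hyc.prodMk_nhds hzc
    have h2 : ∀ᶠ k in atTop, c < f (y k) (z k) := by
      have := hlsc (xstar, xstar) c (by simpa [hx0] using hc0)
      exact hpt.eventually this
    obtain ⟨k, hk1, hk2, hk3⟩ := (hcase.and_eventually (h1.and h2)).exists
    linarith
  · -- Case 2: eventually f (y k) w < f (y k) (z k)
    rw [not_frequently] at hcase
    simp only [not_le] at hcase
    have hkey : ∀ᶠ k in atTop, ‖w - z k‖ ≤ (2 / (γ * lamstar)) * ‖z k - y k‖ := by
      filter_upwards [hcase] with k hk
      have hlamk : 0 < lam k := lt_of_lt_of_le hlamstar (hlam k)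
      set u := y k - z k with hu
      set v := w - z k with hv
      set I := ⟪u, v⟫ with hI
      have hstep : ∀ μ : ℝ, 0 < μ → μ < 1 →
          γ / 2 * ‖v‖ ^ 2 + (1 / lam k) * I ≤
            (γ / 2 + 1 / (2 * lam k)) * ‖v‖ ^ 2 * μ := by
        intro μ hμ0 hμ1
        have hwμ : μ • w + (1 - μ) • z k ∈ C :=
          hCcv hw (hz k) hμ0.le (by linarith) (by ring)
        have h1 := hmin k _ hwμ
        have h2 := hsq (y k) (hy k) w hw (z k) (hz k) μ ⟨hμ0.le, hμ1.le⟩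
        rw [max_eq_right hk.le] at h2
        have hdiff : y k - (μ • w + (1 - μ) • z k) = u - μ • v := by
          simp only [hu, hv]; module
        have hnorm : ‖y k - (μ • w + (1 - μ) • z k)‖ ^ 2
            = ‖u‖ ^ 2 - 2 * (μ * I) + μ ^ 2 * ‖v‖ ^ 2 := by
          rw [hdiff, norm_sub_sq_real, real_inner_smul_right, norm_smul,
            Real.norm_eq_abs, abs_of_pos hμ0]
          ring
        rw [hnorm] at h1
        have hcomb : μ * (1 - μ) * (γ / 2) * ‖v‖ ^ 2 ≤
            1 / (2 * lam k) * (-2 * (μ * I) + μ ^ 2 * ‖v‖ ^ 2) := by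
          have hvz : ‖w - z k‖ = ‖v‖ := rfl
          rw [hvz] at h2
          nlinarith [h1, h2]
        have hdiv : (1 - μ) * (γ / 2) * ‖v‖ ^ 2 ≤
            1 / (2 * lam k) * (-2 * I + μ * ‖v‖ ^ 2) := by
          have hmul : μ * ((1 - μ) * (γ / 2) * ‖v‖ ^ 2) ≤
              μ * (1 / (2 * lam k) * (-2 * I + μ * ‖v‖ ^ 2)) := by
            nlinarith [hcomb]
          exact le_of_mul_le_mul_left hmul hμ0
        have hL : 1 / (2 * lam k) * (2 * I) = (1 / lam k) * I := by
          field_simp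
        nlinarith [hdiv, hL]
      have hAB : γ / 2 * ‖v‖ ^ 2 + (1 / lam k) * I ≤ 0 :=
        aux_small _ _ hstep
      -- I is the inner product of u = y k - z k with v; note ⟪z k - y k, v⟫ = -I
      have hIneg : (1 / lam k) * (-I) ≥ γ / 2 * ‖v‖ ^ 2 := by linarith
      have hnI : 0 ≤ -I := by
        by_contra hcon
        push_neg at hcon
        have : (1 / lam k) * (-I) < 0 := mul_neg_of_pos_of_neg (by positivity) hcon
        nlinarith [sq_nonneg ‖v‖]
      have hcs : -I ≤ ‖z k - y k‖ * ‖v‖ := by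
        have := real_inner_le_norm (z k - y k) v
        have hIe : ⟪z k - y k, v⟫ = -I := by
          rw [hI, hu, ← inner_neg_left]; congr 1; abel
        linarith [hIe ▸ this]
      have hlamle : (1 / lam k) * (-I) ≤ (1 / lamstar) * (‖z k - y k‖ * ‖v‖) := by
        have h1 : (1 / lam k) * (-I) ≤ (1 / lamstar) * (-I) :=
          mul_le_mul_of_nonneg_right (one_div_le_one_div_of_le hlamstar (hlam k)) hnI
        have h2 : (1 / lamstar) * (-I) ≤ (1 / lamstar) * (‖z k - y k‖ * ‖v‖) :=
          mul_le_mul_of_nonneg_left hcs (by positivity)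
        linarith
      have hfin : γ / 2 * ‖v‖ ^ 2 ≤ (1 / lamstar) * (‖z k - y k‖ * ‖v‖) := by linarith
      rcases eq_or_lt_of_le (norm_nonneg v) with h0 | h0
      · rw [show ‖w - z k‖ = ‖v‖ from rfl, ← h0]
        positivity
      · have hmul : γ * lamstar * ‖v‖ ≤ 2 * ‖z k - y k‖ := by
          have h3 : γ * lamstar * ‖v‖ * ‖v‖ ≤ 2 * ‖z k - y k‖ * ‖v‖ := by
            have h4 := mul_le_mul_of_nonneg_left hfin (by linarith : (0:ℝ) ≤ 2 * lamstar)
            have h5 : 2 * lamstar * ((1 / lamstar) * (‖z k - y k‖ * ‖v‖))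
                = 2 * (‖z k - y k‖ * ‖v‖) := by
              rw [show (2:ℝ) * lamstar * ((1 / lamstar) * (‖z k - y k‖ * ‖v‖))
                  = 2 * (lamstar * (1 / lamstar)) * (‖z k - y k‖ * ‖v‖) from by ring,
                mul_one_div_cancel hlamstar.ne']
              ring
            nlinarith [h4, h5]
          exact le_of_mul_le_mul_right h3 h0
        rw [show ‖w - z k‖ = ‖v‖ from rfl]
        rw [div_mul_eq_mul_div, le_div_iff₀ (by positivity : (0:ℝ) < γ * lamstar)]
        linarith [hmul]
    -- take limits
    have hl1 : Tendsto (fun k => ‖w - z k‖) atTop (nhds ‖w - xstar‖) :=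
      ((tendsto_const_nhds.sub hzc).norm)
    have hl2 : Tendsto (fun k => (2 / (γ * lamstar)) * ‖z k - y k‖) atTop (nhds 0) := by
      have : Tendsto (fun k => ‖z k - y k‖) atTop (nhds ‖xstar - xstar‖) :=
        (hzc.sub hyc).norm
      rw [sub_self, norm_zero] at this
      simpa using this.const_mul (2 / (γ * lamstar))
    have hle : ‖w - xstar‖ ≤ 0 := le_of_tendsto_of_tendsto hl1 hl2 hkey
    have hwx : w = xstar :=
      sub_eq_zero.mp (norm_eq_zero.mp (le_antisymm hle (norm_nonneg _)))
    rw [hwx, hx0]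
end
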